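/- arXiv:1705.09396 — 6 statements merged into one kernel-verified Lean document; each statement's English description precedes it below -/
import Mathlib

section
/- Let (e_k) be a sequence of nonnegative reals satisfying e_{k+1} ≤ (1 - η_k) e_k + ε'_k, where η_k ∈ (0,1], ε'_k ≥ 0, Σ_k η_k = ∞, η_k → 0, and ε'_k/η_k → 0 as k → ∞. Then e_k → 0 as k → ∞. -/
open Filter

theorem stmt_2 (e η ε' : ℕ → ℝ)
    (he : ∀ k, 0 ≤ e k)
    (hη : ∀ k, η k ∈ Set.Ioc (0 : ℝ) 1)
    (hε' : ∀ k, 0 ≤ ε' k)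
    (hrec : ∀ k, e (k + 1) ≤ (1 - η k) * e k + ε' k)
    (hdiv : Tendsto (fun n => ∑ k ∈ Finset.range n, η k) atTop atTop)
    (hη0 : Tendsto η atTop (nhds 0))
    (hratio : Tendsto (fun k => ε' k / η k) atTop (nhds 0)) :
    Tendsto e atTop (nhds 0) := by
  rw [Metric.tendsto_atTop]
  intro ε hε
  have hhalf : 0 < ε / 2 := by linarith
  obtain ⟨N, hN⟩ := Metric.tendsto_atTop.1 hratio (ε / 2) hhalf
  have hkey : ∀ k ≥ N, ε' k ≤ ε / 2 * η k := by
    intro k hk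
    have h := hN k hk
    rw [Real.dist_eq, sub_zero] at h
    have hηk := (hη k).1
    have hlt : ε' k / η k < ε / 2 := lt_of_abs_lt h
    have : ε' k = ε' k / η k * η k := by field_simp
    rw [this]
    nlinarith
  set P : ℕ → ℝ := fun m => ∏ j ∈ Finset.range m, (1 - η (N + j)) with hP
  have hPnn : ∀ m, 0 ≤ P m := fun m =>
    Finset.prod_nonneg fun j _ => by have := (hη (N + j)).2; linarith
  have hbound : ∀ m, e (N + m) ≤ ε / 2 + e N * P m := by
    intro m
    induction m with
    | zero => simp [hP]; linarith
    | succ m ih =>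
      have h1 := hrec (N + m)
      have h2 := hkey (N + m) (Nat.le_add_right _ _)
      have hη1 : 0 ≤ 1 - η (N + m) := by have := (hη (N + m)).2; linarith
      have hPs : P (m + 1) = P m * (1 - η (N + m)) := by
        simp [hP, Finset.prod_range_succ]
      have hstep : e (N + (m + 1)) ≤ (1 - η (N + m)) * e (N + m) + ε' (N + m) := by
        have : N + (m + 1) = (N + m) + 1 := by ring
        rw [this]; exact h1
      have hmul := mul_le_mul_of_nonneg_left ih hη1
      have hηpos := (hη (N + m)).1
      rw [hPs]
      nlinarith
  -- partial sums of tail diverge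
  have hS : Tendsto (fun m => ∑ j ∈ Finset.range m, η (N + j)) atTop atTop := by
    have heq : ∀ m, ∑ j ∈ Finset.range m, η (N + j)
        = (∑ k ∈ Finset.range (m + N), η k) - ∑ k ∈ Finset.range N, η k := by
      intro m
      rw [add_comm m N, Finset.sum_range_add]
      ring
    have h1 : Tendsto (fun m => ∑ k ∈ Finset.range (m + N), η k) atTop atTop :=
      hdiv.comp (tendsto_add_atTop_nat N)
    have h2 := tendsto_atTop_add_const_right atTop (-(∑ k ∈ Finset.range N, η k)) h1
    refine h2.congr fun m => by rw [heq m]; ring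
  have hneg : Tendsto (fun m => -(∑ j ∈ Finset.range m, η (N + j))) atTop atBot :=
    tendsto_neg_atTop_atBot.comp hS
  have hexp : Tendsto (fun m => Real.exp (-(∑ j ∈ Finset.range m, η (N + j)))) atTop (nhds 0) :=
    Real.tendsto_exp_atBot.comp hneg
  have hPle : ∀ m, P m ≤ Real.exp (-(∑ j ∈ Finset.range m, η (N + j))) := by
    intro m
    have : Real.exp (-(∑ j ∈ Finset.range m, η (N + j)))
        = ∏ j ∈ Finset.range m, Real.exp (-(η (N + j))) := by
      rw [← Real.exp_sum, ← Finset.sum_neg_distrib]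
    rw [this]
    refine Finset.prod_le_prod (fun j _ => by have := (hη (N + j)).2; linarith)
      (fun j _ => ?_)
    have := Real.add_one_le_exp (-(η (N + j)))
    linarith
  have hP0 : Tendsto P atTop (nhds 0) :=
    squeeze_zero hPnn hPle hexp
  have hP0' : Tendsto (fun m => e N * P m) atTop (nhds 0) := by
    simpa using hP0.const_mul (e N)
  obtain ⟨M, hM⟩ := Metric.tendsto_atTop.1 hP0' (ε / 2) hhalf
  refine ⟨N + M, fun n hn => ?_⟩
  rw [Real.dist_eq, sub_zero, abs_of_nonneg (he n)]
  have hmM : n - N ≥ M := by omega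
  have hnN : N + (n - N) = n := by omega
  have h1 := hbound (n - N)
  have h2 := hM (n - N) hmM
  rw [Real.dist_eq, sub_zero] at h2
  have h3 : e N * P (n - N) < ε / 2 := lt_of_abs_lt h2
  rw [hnN] at h1
  linarith
end

section
/- Let f be convex on W = conv(S) with curvature at most M, let w* minimize f over W, and suppose w_{k+1} = (1-η_k)w_k + η_k d_k where d_k ∈ S satisfies f((1-η_k)w_k + η_k d_k) ≤ min_{d∈S} f((1-η_k)w_k + η_k d) + ε_k η_k. Then f(w_{k+1}) - f(w*) ≤ (1-η_k)(f(w_k) - f(w*)) + η_k ε_k + (M/2)η_k². -/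
/-!
Pick `d ∈ S` with `⟪∇f(w_k), d⟫ ≤ ⟪∇f(w_k), w*⟫`; it exists because a linear functional
(being concave) attains its minimum over `conv S` on `S`. The greedy step
is within `ε_k η_k` of the step towards `d`, the curvature bound controls that step by the linear
model, and the first-order characterisation of convexity bounds the linear model by
`f(w*) - f(w_k)`.
-/

open RealInnerProductSpace

theorem ConvexOn.apply_sub_le_of_hasFDerivAt {E : Type*} [NormedAddCommGroup E]
    [NormedSpace ℝ E] {s : Set E} {f : E → ℝ} {f' : E →L[ℝ] ℝ} {x y : E} (hf : ConvexOn ℝ s f)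
    (hf' : HasFDerivAt f f' x) (hx : x ∈ s) (hy : y ∈ s) : f' (y - x) ≤ f y - f x := by
  let ℓ : ℝ →ᵃ[ℝ] E := AffineMap.lineMap x y
  have hconvex : ConvexOn ℝ (ℓ ⁻¹' s) (f ∘ ℓ) := hf.comp_affineMap ℓ
  have hderiv : HasDerivAt (f ∘ ℓ) (f' (y - x)) 0 :=
    (by simpa [ℓ] using hf' : HasFDerivAt f f' (ℓ 0)).comp_hasDerivAt 0
      AffineMap.hasDerivAt_lineMap
  simpa [ℓ, slope_def_field] using
    hconvex.le_slope_of_hasDerivAt (by simpa [ℓ] using hx) (by simpa [ℓ] using hy) zero_lt_one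
      hderiv

theorem ConvexOn.inner_sub_le_of_hasGradientAt {F : Type*} [NormedAddCommGroup F]
    [InnerProductSpace ℝ F] [CompleteSpace F] {s : Set F} {f : F → ℝ} {g x y : F}
    (hf : ConvexOn ℝ s f) (hg : HasGradientAt f g x) (hx : x ∈ s) (hy : y ∈ s) :
    ⟪g, y - x⟫ ≤ f y - f x := by
  simpa using hf.apply_sub_le_of_hasFDerivAt hg.hasFDerivAt hx hy

theorem stmt_6_general (n : ℕ) (M : ℝ) (S : Set (EuclideanSpace ℝ (Fin n)))
    (W : Set (EuclideanSpace ℝ (Fin n))) (hW : W = convexHull ℝ S)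
    (f : EuclideanSpace ℝ (Fin n) → ℝ) (g : EuclideanSpace ℝ (Fin n) → EuclideanSpace ℝ (Fin n))
    (hf : ConvexOn ℝ W f)
    (hg : ∀ x ∈ W, HasGradientAt f (g x) x)
    (hcurv : ∀ w ∈ W, ∀ d ∈ S, ∀ η ∈ Set.Icc (0 : ℝ) 1,
      f ((1 - η) • w + η • d) ≤ f w + η * ⟪g w, d - w⟫ + (M / 2) * η ^ 2)
    (wstar : EuclideanSpace ℝ (Fin n)) (hws : wstar ∈ W)
    (ηk εk : ℝ) (hηk : ηk ∈ Set.Icc (0 : ℝ) 1)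
    (wk dk : EuclideanSpace ℝ (Fin n)) (hwk : wk ∈ W)
    (happrox : ∀ d ∈ S, f ((1 - ηk) • wk + ηk • dk) ≤ f ((1 - ηk) • wk + ηk • d) + εk * ηk) :
    f ((1 - ηk) • wk + ηk • dk) - f wstar
      ≤ (1 - ηk) * (f wk - f wstar) + ηk * εk + (M / 2) * ηk ^ 2 := by
  obtain ⟨d, hdS, hd⟩ := ((innerₗ _ (g wk)).concaveOn convex_univ).exists_le_of_mem_convexHull
    (Set.subset_univ S) (hW ▸ hws)
  have hlinear : ⟪g wk, d - wk⟫ ≤ f wstar - f wk := by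
    have hgrad := hf.inner_sub_le_of_hasGradientAt (hg wk hwk) hwk hws
    simp only [innerₗ_apply_apply, inner_sub_right] at hd hgrad ⊢
    linarith
  calc f ((1 - ηk) • wk + ηk • dk) - f wstar
      ≤ f wk + ηk * ⟪g wk, d - wk⟫ + (M / 2) * ηk ^ 2 + εk * ηk - f wstar := by
        linarith [happrox d hdS, hcurv wk hwk d hdS ηk hηk]
    _ ≤ f wk + ηk * (f wstar - f wk) + (M / 2) * ηk ^ 2 + εk * ηk - f wstar := by
        gcongr
        exact hηk.1
    _ = (1 - ηk) * (f wk - f wstar) + ηk * εk + (M / 2) * ηk ^ 2 := by ring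

theorem stmt_6 (n : ℕ) (M : ℝ) (S : Set (EuclideanSpace ℝ (Fin n))) (hS : IsCompact S)
    (W : Set (EuclideanSpace ℝ (Fin n))) (hW : W = convexHull ℝ S)
    (f : EuclideanSpace ℝ (Fin n) → ℝ) (g : EuclideanSpace ℝ (Fin n) → EuclideanSpace ℝ (Fin n))
    (hf : ConvexOn ℝ W f)
    (hg : ∀ x ∈ W, HasGradientAt f (g x) x)
    (hcurv : ∀ w ∈ W, ∀ d ∈ S, ∀ η ∈ Set.Icc (0 : ℝ) 1,
      f ((1 - η) • w + η • d) ≤ f w + η * ⟪g w, d - w⟫ + (M / 2) * η ^ 2)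
    (wstar : EuclideanSpace ℝ (Fin n)) (hws : wstar ∈ W) (hmin : ∀ x ∈ W, f wstar ≤ f x)
    (ηk εk : ℝ) (hηk : ηk ∈ Set.Icc (0 : ℝ) 1) (hεk : 0 ≤ εk)
    (wk dk : EuclideanSpace ℝ (Fin n)) (hwk : wk ∈ W) (hdk : dk ∈ S)
    (happrox : ∀ d ∈ S, f ((1 - ηk) • wk + ηk • dk) ≤ f ((1 - ηk) • wk + ηk • d) + εk * ηk) :
    f ((1 - ηk) • wk + ηk • dk) - f wstar
      ≤ (1 - ηk) * (f wk - f wstar) + ηk * εk + (M / 2) * ηk ^ 2 :=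
  stmt_6_general n M S W hW f g hf hg hcurv wstar hws ηk εk hηk wk dk hwk happrox
end

section
/- Let f be convex on W = conv(S) with curvature at most M. Suppose w ∈ W, η ∈ (0,1], and d ∈ S satisfy f((1-η)w + ηd) ≤ min_{d'∈S} f((1-η)w + ηd') + ηε. Then ⟨∇f(w), d⟩ ≤ min_{d'∈S} ⟨∇f(w), d'⟩ + ε + (M/2)η. -/
/-!
Convexity puts the graph of `f` above its tangent plane at `w`, so moving from `w` towards `d`
decreases `f` by at most `η ⟪∇f(w), w - d⟫`, while the curvature bound says moving towards `d'`
decreases it by at least `η ⟪∇f(w), w - d'⟫ - (M/2) η²`. Since the step towards `d` is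
`ηε`-optimal, comparing the two and dividing by `η` gives the claim.
-/

open RealInnerProductSpace AffineMap

section FirstOrder

variable {E : Type*} [NormedAddCommGroup E]

theorem ConvexOn.apply_add_le_of_hasFDerivAt [NormedSpace ℝ E] {s : Set E} {f : E → ℝ}
    {f' : E →L[ℝ] ℝ} {x y : E} (hf : ConvexOn ℝ s f) (hx : x ∈ s) (hy : y ∈ s)
    (hf' : HasFDerivAt f f' x) :
    f x + f' (y - x) ≤ f y := by
  set φ : ℝ → ℝ := f ∘ lineMap x y
  have hφ : ConvexOn ℝ (lineMap x y ⁻¹' s) φ := hf.comp_affineMap _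
  have hφ' : HasDerivAt φ (f' (y - x)) 0 := by
    rw [← lineMap_apply_zero x y (k := ℝ)] at hf'
    exact hf'.comp_hasDerivAt 0 hasDerivAt_lineMap
  have := hφ.le_slope_of_hasDerivAt (by simpa using hx) (by simpa using hy) zero_lt_one hφ'
  simp only [slope_def_field, sub_zero, div_one, φ, Function.comp_apply,
    lineMap_apply_zero, lineMap_apply_one] at this
  linarith

theorem ConvexOn.apply_add_inner_le_of_hasGradientAt [InnerProductSpace ℝ E] [CompleteSpace E]
    {s : Set E} {f : E → ℝ} {G x y : E} (hf : ConvexOn ℝ s f) (hx : x ∈ s) (hy : y ∈ s)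
    (hG : HasGradientAt f G x) :
    f x + ⟪G, y - x⟫ ≤ f y := by
  simpa using hf.apply_add_le_of_hasFDerivAt hx hy hG.hasFDerivAt

end FirstOrder

theorem stmt_8_general (n : ℕ) (M ε : ℝ)
    (S : Set (EuclideanSpace ℝ (Fin n)))
    (W : Set (EuclideanSpace ℝ (Fin n))) (hW : W = convexHull ℝ S)
    (f : EuclideanSpace ℝ (Fin n) → ℝ) (g : EuclideanSpace ℝ (Fin n) → EuclideanSpace ℝ (Fin n))
    (hf : ConvexOn ℝ W f)
    (hg : ∀ x ∈ W, HasGradientAt f (g x) x)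
    (hcurv : ∀ w ∈ W, ∀ d ∈ S, ∀ η ∈ Set.Icc (0 : ℝ) 1,
      f ((1 - η) • w + η • d) ≤ f w + η * ⟪g w, d - w⟫ + (M / 2) * η ^ 2)
    (w d : EuclideanSpace ℝ (Fin n)) (hw : w ∈ W) (hd : d ∈ S)
    (η : ℝ) (hη : η ∈ Set.Ioc (0 : ℝ) 1)
    (happrox : ∀ d' ∈ S, f ((1 - η) • w + η • d) ≤ f ((1 - η) • w + η • d') + η * ε) :
    ∀ d' ∈ S, ⟪g w, d⟫ ≤ ⟪g w, d'⟫ + ε + (M / 2) * η := by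
  intro d' hd'
  obtain ⟨hη0, hη1⟩ := hη
  have hWc : Convex ℝ W := hW ▸ convex_convexHull ℝ S
  have hdW : d ∈ W := hW ▸ subset_convexHull ℝ S hd
  have hstep : (1 - η) • w + η • d - w = η • (d - w) := by
    rw [sub_smul, one_smul, smul_sub]; abel
  have htangent : f w + η * ⟪g w, d - w⟫ ≤ f ((1 - η) • w + η • d) := by
    have := hf.apply_add_inner_le_of_hasGradientAt hw
      (hWc hw hdW (a := 1 - η) (by linarith) hη0.le (by ring)) (hg w hw)
    rwa [hstep, real_inner_smul_right] at this
  have hcurv' := hcurv w hw d' hd' η ⟨hη0.le, hη1⟩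
  have hcompare : η * ⟪g w, d - w⟫ ≤ η * (⟪g w, d' - w⟫ + ε + (M / 2) * η) := by
    linarith [happrox d' hd']
  have hdirection := le_of_mul_le_mul_left hcompare hη0
  rw [inner_sub_right, inner_sub_right] at hdirection
  linarith

theorem stmt_8 (n : ℕ) (M ε : ℝ) (hε : 0 ≤ ε)
    (S : Set (EuclideanSpace ℝ (Fin n))) (hS : IsCompact S)
    (W : Set (EuclideanSpace ℝ (Fin n))) (hW : W = convexHull ℝ S)
    (f : EuclideanSpace ℝ (Fin n) → ℝ) (g : EuclideanSpace ℝ (Fin n) → EuclideanSpace ℝ (Fin n))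
    (hf : ConvexOn ℝ W f)
    (hg : ∀ x ∈ W, HasGradientAt f (g x) x)
    (hcurv : ∀ w ∈ W, ∀ d ∈ S, ∀ η ∈ Set.Icc (0 : ℝ) 1,
      f ((1 - η) • w + η • d) ≤ f w + η * ⟪g w, d - w⟫ + (M / 2) * η ^ 2)
    (w d : EuclideanSpace ℝ (Fin n)) (hw : w ∈ W) (hd : d ∈ S)
    (η : ℝ) (hη : η ∈ Set.Ioc (0 : ℝ) 1)
    (happrox : ∀ d' ∈ S, f ((1 - η) • w + η • d) ≤ f ((1 - η) • w + η • d') + η * ε) :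
    ∀ d' ∈ S, ⟪g w, d⟫ ≤ ⟪g w, d'⟫ + ε + (M / 2) * η :=
  stmt_8_general n M ε S W hW f g hf hg hcurv w d hw hd η hη happrox
end

section
/- Let g_1, …, g_t ∈ ℝⁿ, σ_1, …, σ_t > 0, Φ : ℝⁿ → ℝ be ρ-strongly convex on a compact convex set X, F_k(w) = Σ_{i=1}^{k-1} σ_i ⟨g_i, w⟩ + Φ(w), and w*_k = argmin_{w ∈ X} F_k(w). Then for any w ∈ X, Σ_{k=1}^t σ_k ⟨g_k, w*_k - w⟩ ≤ Σ_{k=1}^t (2σ_k² ‖g_k‖₂²)/ρ + R², where R² = max_{x∈X} Φ(x) - Φ(w*_1). -/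
open RealInnerProductSpace

theorem stmt_10 (n t : ℕ) (ht : 1 ≤ t) (ρ R2 : ℝ) (hρ : 0 < ρ)
    (X : Set (EuclideanSpace ℝ (Fin n))) (hXc : IsCompact X) (hX : Convex ℝ X)
    (Φ : EuclideanSpace ℝ (Fin n) → ℝ)
    (gΦ : EuclideanSpace ℝ (Fin n) → EuclideanSpace ℝ (Fin n))
    (hgΦ : ∀ x ∈ X, HasGradientAt Φ (gΦ x) x)
    (hsc : ∀ x ∈ X, ∀ y ∈ X, Φ x + ⟪gΦ x, y - x⟫ + (ρ / 2) * ‖y - x‖ ^ 2 ≤ Φ y)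
    (g : ℕ → EuclideanSpace ℝ (Fin n)) (σ : ℕ → ℝ) (hσ : ∀ k, 0 < σ k)
    (F : ℕ → EuclideanSpace ℝ (Fin n) → ℝ)
    (hF : ∀ k, ∀ w, F k w = (∑ i ∈ Finset.Ico 1 k, σ i * ⟪g i, w⟫) + Φ w)
    (wstar : ℕ → EuclideanSpace ℝ (Fin n))
    (hws : ∀ k, wstar k ∈ X ∧ ∀ w ∈ X, F k (wstar k) ≤ F k w)
    (hR2 : IsLUB ((fun x => Φ x - Φ (wstar 1)) '' X) R2) :
    ∀ w ∈ X, ∑ k ∈ Finset.Icc 1 t, σ k * ⟪g k, wstar k - w⟫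
      ≤ (∑ k ∈ Finset.Icc 1 t, 2 * (σ k) ^ 2 * ‖g k‖ ^ 2 / ρ) + R2 := by
  intro w hw
  -- relation between consecutive F
  have hrel : ∀ k, 1 ≤ k → ∀ u, F (k+1) u = F k u + σ k * ⟪g k, u⟫ := by
    intro k hk u
    rw [hF, hF, Finset.sum_Ico_succ_top hk]; ring
  -- midpoint strong convexity of F k
  have hmid : ∀ k, ∀ x ∈ X, ∀ y ∈ X,
      F k ((1/2:ℝ) • x + (1/2:ℝ) • y) ≤ (F k x + F k y)/2 - (ρ/8) * ‖x - y‖^2 := by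
    intro k x hx y hy
    set z : EuclideanSpace ℝ (Fin n) := (1/2:ℝ) • x + (1/2:ℝ) • y with hzdef
    have hz : z ∈ X := hX hx hy (by norm_num) (by norm_num) (by norm_num)
    have h1 := hsc z hz x hx
    have h2 := hsc z hz y hy
    have hxz : x - z = (1/2:ℝ) • (x - y) := by rw [hzdef]; module
    have hyz : y - z = (-(1/2):ℝ) • (x - y) := by rw [hzdef]; module
    have hinner : ⟪gΦ z, x - z⟫ + ⟪gΦ z, y - z⟫ = 0 := by
      rw [← inner_add_right]
      have : (x - z) + (y - z) = 0 := by rw [hzdef]; module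
      rw [this, inner_zero_right]
    have hnx : ‖x - z‖^2 = (1/4) * ‖x - y‖^2 := by
      rw [hxz, norm_smul]; simp; ring
    have hny : ‖y - z‖^2 = (1/4) * ‖x - y‖^2 := by
      rw [hyz, norm_smul]; simp; ring
    have hΦ : Φ z ≤ (Φ x + Φ y)/2 - (ρ/8) * ‖x - y‖^2 := by
      nlinarith [h1, h2]
    have hL : ∀ gv : EuclideanSpace ℝ (Fin n),
        ⟪gv, z⟫ = (⟪gv, x⟫ + ⟪gv, y⟫)/2 := by
      intro gv
      rw [hzdef, inner_add_right, real_inner_smul_right, real_inner_smul_right]; ring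
    have hLsum : ∑ i ∈ Finset.Ico 1 k, σ i * ⟪g i, z⟫
        = ((∑ i ∈ Finset.Ico 1 k, σ i * ⟪g i, x⟫) + (∑ i ∈ Finset.Ico 1 k, σ i * ⟪g i, y⟫))/2 := by
      rw [← Finset.sum_add_distrib, Finset.sum_div]
      exact Finset.sum_congr rfl (fun i _ => by rw [hL (g i)]; ring)
    rw [hF, hF, hF, hLsum]
    linarith [hΦ]
  -- stability bound
  have hstab : ∀ k, 1 ≤ k → σ k * ⟪g k, wstar k - wstar (k+1)⟫ ≤ 2 * (σ k)^2 * ‖g k‖^2 / ρ := by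
    intro k hk
    set x := wstar k
    set y := wstar (k+1)
    have hxX : x ∈ X := (hws k).1
    have hyX : y ∈ X := (hws (k+1)).1
    set d := ‖x - y‖ with hd
    have hdnn : 0 ≤ d := norm_nonneg _
    have hz : (1/2:ℝ) • x + (1/2:ℝ) • y ∈ X := hX hxX hyX (by norm_num) (by norm_num) (by norm_num)
    have hA : F k x + (ρ/4) * d^2 ≤ F k y := by
      have h1 := (hws k).2 _ hz
      have h2 := hmid k x hxX y hyX
      linarith
    have hB : F (k+1) y + (ρ/4) * d^2 ≤ F (k+1) x := by
      have h1 := (hws (k+1)).2 _ hz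
      have h2 := hmid (k+1) x hxX y hyX
      linarith
    have hD : (ρ/2) * d^2 ≤ σ k * ⟪g k, x - y⟫ := by
      have e1 := hrel k hk x
      have e2 := hrel k hk y
      have : σ k * ⟪g k, x - y⟫ = σ k * ⟪g k, x⟫ - σ k * ⟪g k, y⟫ := by
        rw [inner_sub_right]; ring
      rw [this]
      linarith
    have hC : σ k * ⟪g k, x - y⟫ ≤ σ k * (‖g k‖ * d) := by
      apply mul_le_mul_of_nonneg_left _ (hσ k).le
      exact real_inner_le_norm _ _
    rcases eq_or_lt_of_le hdnn with h0 | h0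
    · have : σ k * ⟪g k, x - y⟫ ≤ 0 := by rw [← h0] at hC; linarith
      have : 0 ≤ 2 * (σ k)^2 * ‖g k‖^2 / ρ := by positivity
      linarith
    · have hdle : d ≤ 2 * σ k * ‖g k‖ / ρ := by
        have h2 : ρ * d^2 ≤ 2 * σ k * ‖g k‖ * d := by nlinarith
        rw [le_div_iff₀ hρ]
        nlinarith
      calc σ k * ⟪g k, x - y⟫ ≤ σ k * (‖g k‖ * d) := hC
        _ ≤ σ k * (‖g k‖ * (2 * σ k * ‖g k‖ / ρ)) := by
            apply mul_le_mul_of_nonneg_left _ (hσ k).le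
            apply mul_le_mul_of_nonneg_left hdle (norm_nonneg _)
        _ = 2 * (σ k)^2 * ‖g k‖^2 / ρ := by ring
  -- be-the-leader
  have btl : ∀ m, ∀ u ∈ X,
      (∑ k ∈ Finset.Icc 1 m, σ k * ⟪g k, wstar (k+1)⟫) + Φ (wstar 1) ≤ F (m+1) u := by
    intro m
    induction m with
    | zero =>
      intro u hu
      have h1 := (hws 1).2 u hu
      rw [hF 1 (wstar 1), hF 1 u] at h1
      simp only [Finset.Ico_self, Finset.sum_empty, zero_add] at h1
      rw [show Finset.Icc 1 0 = (∅ : Finset ℕ) from Finset.Icc_eq_empty (by norm_num),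
        Finset.sum_empty, zero_add, hF 1 u]
      simp only [Finset.Ico_self, Finset.sum_empty, zero_add]
      linarith
    | succ m ih =>
      intro u hu
      have hsucc : 1 ≤ m + 1 := Nat.succ_le_succ (Nat.zero_le m)
      rw [Finset.sum_Icc_succ_top hsucc]
      have h1 := ih (wstar (m+2)) (hws (m+2)).1
      have h2 : F (m+1) (wstar (m+2)) + σ (m+1) * ⟪g (m+1), wstar (m+2)⟫ = F (m+2) (wstar (m+2)) :=
        (hrel (m+1) hsucc _).symm
      have h3 := (hws (m+2)).2 u hu
      linarith
  -- assemble
  have hsplit : ∑ k ∈ Finset.Icc 1 t, σ k * ⟪g k, wstar k - w⟫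
      = (∑ k ∈ Finset.Icc 1 t, σ k * ⟪g k, wstar k - wstar (k+1)⟫)
        + (∑ k ∈ Finset.Icc 1 t, σ k * ⟪g k, wstar (k+1)⟫)
        - (∑ k ∈ Finset.Icc 1 t, σ k * ⟪g k, w⟫) := by
    rw [eq_sub_iff_add_eq, ← Finset.sum_add_distrib, ← Finset.sum_add_distrib]
    exact Finset.sum_congr rfl (fun k _ => by
      rw [inner_sub_right, inner_sub_right]; ring)
  have hsum1 : ∑ k ∈ Finset.Icc 1 t, σ k * ⟪g k, wstar k - wstar (k+1)⟫
      ≤ ∑ k ∈ Finset.Icc 1 t, 2 * (σ k)^2 * ‖g k‖^2 / ρ :=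
    Finset.sum_le_sum (fun k hk => hstab k (Finset.mem_Icc.mp hk).1)
  have hbtl := btl t w hw
  have hFt : F (t+1) w = (∑ k ∈ Finset.Icc 1 t, σ k * ⟪g k, w⟫) + Φ w := by
    rw [hF, Finset.Ico_add_one_right_eq_Icc]
  have hR : Φ w - Φ (wstar 1) ≤ R2 := hR2.1 ⟨w, hw, rfl⟩
  rw [hsplit]
  rw [hFt] at hbtl
  linarith
end

section
/- Let η_k = 1/k^p with p ∈ (0,1), σ_k ≤ c η_k^{3/2} with c > 0, and let R, ρ, λ ≥ 1, L be positive constants. Define K = (√(1/(2ρ))·cL/(1-p) + √((λR² + c²L²)/(ρ(1-p)) + c²L²/(2ρ(1-p)²)))². If e_1 ≤ K η_1 and for all k ≥ 1, e_{k+1} ≤ (1 - η_k)e_k + (λR²/ρ)η_k² + √(2/ρ)·σ_k L·√(e_{k+1}), then e_k ≤ K η_k for all k ≥ 1. -/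
lemma quad_aux (x D C G : ℝ) (hD : 0 ≤ D) (hC : 0 ≤ C) (hG : 0 < G)
    (hx0 : 0 ≤ x) (hx : x ≤ D + C * Real.sqrt x) (hDG : D + C * Real.sqrt G ≤ G) :
    x ≤ G := by
  by_contra h
  push_neg at h
  have hsG : 0 < Real.sqrt G := Real.sqrt_pos.mpr hG
  have hGsq : Real.sqrt G * Real.sqrt G = G := Real.mul_self_sqrt hG.le
  have hxsq : Real.sqrt x * Real.sqrt x = x := Real.mul_self_sqrt hx0
  have hCG : C ≤ Real.sqrt G := by nlinarith
  have hsx : Real.sqrt G < Real.sqrt x := Real.sqrt_lt_sqrt hG.le h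
  nlinarith [mul_pos (sub_pos.mpr hsx) hsG, hsx, hsG]

theorem stmt_14 (p c R ρ L lam : ℝ)
    (hp : p ∈ Set.Ioo (0 : ℝ) 1) (hc : 0 < c) (hR : 0 < R) (hρ : 0 < ρ)
    (hL : 0 < L) (hlam : 1 ≤ lam)
    (η : ℕ → ℝ) (hη : ∀ k : ℕ, η k = ((k : ℝ)) ^ (-p))
    (σ : ℕ → ℝ) (hσ : ∀ k, 1 ≤ k → 0 ≤ σ k ∧ σ k ≤ c * (η k) ^ ((3 : ℝ) / 2))
    (K : ℝ)
    (hK : K = (Real.sqrt (1 / (2 * ρ)) * c * L / (1 - p)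
      + Real.sqrt ((lam * R ^ 2 + c ^ 2 * L ^ 2) / (ρ * (1 - p))
        + c ^ 2 * L ^ 2 / (2 * ρ * (1 - p) ^ 2))) ^ 2)
    (e : ℕ → ℝ) (he : ∀ k, 0 ≤ e k)
    (he1 : e 1 ≤ K * η 1)
    (hrec : ∀ k, 1 ≤ k →
      e (k + 1) ≤ (1 - η k) * e k + (lam * R ^ 2 / ρ) * (η k) ^ 2
        + Real.sqrt (2 / ρ) * σ k * L * Real.sqrt (e (k + 1))) :
    ∀ k, 1 ≤ k → e k ≤ K * η k := by
  obtain ⟨hp0, hp1⟩ := hp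
  have hp1' : 0 < 1 - p := by linarith
  have hρ' : ρ ≠ 0 := hρ.ne'
  have hp1n : (1 : ℝ) - p ≠ 0 := hp1'.ne'
  -- basic facts about η
  have hηpos : ∀ k : ℕ, 1 ≤ k → 0 < η k := by
    intro k hk
    have h1 : (1 : ℝ) ≤ (k : ℝ) := by exact_mod_cast hk
    rw [hη]
    exact Real.rpow_pos_of_pos (by linarith) _
  have hηle1 : ∀ k : ℕ, 1 ≤ k → η k ≤ 1 := by
    intro k hk
    have h1 : (1 : ℝ) ≤ (k : ℝ) := by exact_mod_cast hk
    rw [hη]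
    exact Real.rpow_le_one_of_one_le_of_nonpos h1 (by linarith)
  have hanti : ∀ k : ℕ, 1 ≤ k → η (k + 1) ≤ η k := by
    intro k hk
    have h1 : (1 : ℝ) ≤ (k : ℝ) := by exact_mod_cast hk
    rw [hη, hη]
    push_cast
    exact Real.rpow_le_rpow_of_nonpos (by linarith) (by linarith) (by linarith)
  -- key decay inequality
  have hkey : ∀ k : ℕ, 1 ≤ k → η k - p * (η k) ^ 2 ≤ η (k + 1) := by
    intro k hk
    have h1 : (1 : ℝ) ≤ (k : ℝ) := by exact_mod_cast hk
    have h0 : (0 : ℝ) < (k : ℝ) := by linarith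
    rw [hη, hη]
    push_cast
    set x := (k : ℝ) with hxdef
    have hxp : 0 < x ^ p := Real.rpow_pos_of_pos h0 p
    have hxnp : 0 < x ^ (-p) := Real.rpow_pos_of_pos h0 (-p)
    have hmul : x ^ (-p) * x ^ p = 1 := by
      rw [← Real.rpow_add h0]; simp
    have hbern : (x + 1) ^ p ≤ x ^ p * (1 + p / x) := by
      have h2 : (x + 1) ^ p = x ^ p * (1 + 1 / x) ^ p := by
        rw [← Real.mul_rpow h0.le (by positivity)]
        congr 1
        field_simp
      rw [h2]
      have h3 : ((1 : ℝ) + 1 / x) ^ p ≤ 1 + p * (1 / x) :=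
        rpow_one_add_le_one_add_mul_self
          (le_trans (by norm_num : (-1:ℝ) ≤ 0) (by positivity)) hp0.le hp1.le
      calc x ^ p * (1 + 1 / x) ^ p ≤ x ^ p * (1 + p * (1 / x)) :=
            mul_le_mul_of_nonneg_left h3 hxp.le
        _ = x ^ p * (1 + p / x) := by ring
    have hstepA : x ^ (-p) * (1 - p / x) ≤ (x + 1) ^ (-p) := by
      have hx1p : 0 < (x + 1) ^ p := Real.rpow_pos_of_pos (by linarith) p
      rcases le_or_gt (1 - p / x) 0 with h | h
      · exact (mul_nonpos_of_nonneg_of_nonpos hxnp.le h).trans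
          (Real.rpow_pos_of_pos (by linarith) (-p)).le
      · rw [Real.rpow_neg (by linarith : (0 : ℝ) ≤ x + 1), inv_eq_one_div,
          le_div_iff₀ hx1p]
        have hA : 0 ≤ x ^ (-p) * (1 - p / x) := mul_nonneg hxnp.le h.le
        calc x ^ (-p) * (1 - p / x) * (x + 1) ^ p
            ≤ x ^ (-p) * (1 - p / x) * (x ^ p * (1 + p / x)) :=
              mul_le_mul_of_nonneg_left hbern hA
          _ = (x ^ (-p) * x ^ p) * ((1 - p / x) * (1 + p / x)) := by ring
          _ = 1 - (p / x) ^ 2 := by rw [hmul]; ring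
          _ ≤ 1 := by nlinarith [sq_nonneg (p / x)]
    have hcomp : x ^ (-p) / x ≤ (x ^ (-p)) ^ 2 := by
      have e1 : x ^ (-p) / x = x ^ (-p) * x ^ (-1 : ℝ) := by
        rw [Real.rpow_neg_one]; ring
      rw [e1, sq]
      exact mul_le_mul_of_nonneg_left
        (Real.rpow_le_rpow_of_exponent_le h1 (by linarith)) hxnp.le
    have hstepB : x ^ (-p) - p * (x ^ (-p)) ^ 2 ≤ x ^ (-p) * (1 - p / x) := by
      have h6 : x ^ (-p) * (1 - p / x) = x ^ (-p) - p * (x ^ (-p) / x) := by ring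
      rw [h6]
      have := mul_le_mul_of_nonneg_left hcomp hp0.le
      linarith
    exact hstepB.trans hstepA
  -- facts about K
  set a := Real.sqrt (1 / (2 * ρ)) * c * L / (1 - p) with ha
  set M := (lam * R ^ 2 + c ^ 2 * L ^ 2) / (ρ * (1 - p)) with hM
  have hapos : 0 < a := by
    rw [ha]
    have : 0 < Real.sqrt (1 / (2 * ρ)) := Real.sqrt_pos.mpr (by positivity)
    positivity
  have hMpos : 0 < M := by rw [hM]; positivity
  have ha2 : a ^ 2 = c ^ 2 * L ^ 2 / (2 * ρ * (1 - p) ^ 2) := by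
    have hs : Real.sqrt (1 / (2 * ρ)) ^ 2 = 1 / (2 * ρ) := Real.sq_sqrt (by positivity)
    rw [ha, div_pow, mul_pow, mul_pow, hs,
      div_eq_div_iff (by positivity) (by positivity)]
    field_simp
  rw [← ha2] at hK
  have hsumpos : 0 < a + Real.sqrt (M + a ^ 2) := by positivity
  have hKpos : 0 < K := by rw [hK]; positivity
  have hsqrtK : Real.sqrt K = a + Real.sqrt (M + a ^ 2) := by
    rw [hK, Real.sqrt_sq hsumpos.le]
  have hKeq : K = M + 2 * a * Real.sqrt K := by
    have hs : (Real.sqrt (M + a ^ 2)) ^ 2 = M + a ^ 2 :=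
      Real.sq_sqrt (by positivity)
    rw [hsqrtK, hK]
    linear_combination hs
  have hBcL : Real.sqrt (2 / ρ) * c * L = 2 * (1 - p) * a := by
    have h44 : Real.sqrt 4 = 2 := by
      rw [show (4 : ℝ) = 2 ^ 2 by norm_num]
      exact Real.sqrt_sq (by norm_num)
    have h4 : Real.sqrt (2 / ρ) = 2 * Real.sqrt (1 / (2 * ρ)) := by
      rw [show (2 : ℝ) / ρ = 4 * (1 / (2 * ρ)) by field_simp; ring,
        Real.sqrt_mul (by norm_num), h44]
    rw [h4, ha]
    field_simp
  have hmain : lam * R ^ 2 / ρ + Real.sqrt (2 / ρ) * c * L * Real.sqrt K ≤ (1 - p) * K := by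
    rw [hBcL]
    have h6 : (1 - p) * M = (lam * R ^ 2 + c ^ 2 * L ^ 2) / ρ := by
      rw [hM]; field_simp
    have h8 : (lam * R ^ 2 + c ^ 2 * L ^ 2) / ρ = lam * R ^ 2 / ρ + c ^ 2 * L ^ 2 / ρ :=
      add_div _ _ _
    have h7 : 0 ≤ c ^ 2 * L ^ 2 / ρ := by positivity
    calc lam * R ^ 2 / ρ + 2 * (1 - p) * a * Real.sqrt K
        ≤ (lam * R ^ 2 + c ^ 2 * L ^ 2) / ρ + 2 * (1 - p) * a * Real.sqrt K := by
          rw [h8]; linarith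
      _ = (1 - p) * M + 2 * (1 - p) * a * Real.sqrt K := by rw [h6]
      _ = (1 - p) * (M + 2 * a * Real.sqrt K) := by ring
      _ = (1 - p) * K := by rw [← hKeq]
  -- induction
  intro k hk
  induction k, hk using Nat.le_induction with
  | base => exact he1
  | succ k hk IH =>
    have hηk := hηpos k hk
    have hηk1 := hηle1 k hk
    have hηk1pos := hηpos (k + 1) (by omega)
    obtain ⟨hσ0, hσb⟩ := hσ k hk
    have hrk := hrec k hk
    have hC0 : 0 ≤ Real.sqrt (2 / ρ) * σ k * L :=
      mul_nonneg (mul_nonneg (Real.sqrt_nonneg _) hσ0) hL.le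
    have hD0 : 0 ≤ (1 - η k) * e k + (lam * R ^ 2 / ρ) * (η k) ^ 2 := by
      have h9 : 0 ≤ 1 - η k := by linarith
      have h10 := he k
      positivity
    have hGpos : 0 < K * η (k + 1) := mul_pos hKpos hηk1pos
    have hbound : (1 - η k) * e k + (lam * R ^ 2 / ρ) * (η k) ^ 2
        + Real.sqrt (2 / ρ) * σ k * L * Real.sqrt (K * η (k + 1)) ≤ K * η (k + 1) := by
      have hsqG : Real.sqrt (K * η (k + 1)) ≤ Real.sqrt K * Real.sqrt (η k) := by
        rw [Real.sqrt_mul hKpos.le]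
        exact mul_le_mul_of_nonneg_left (Real.sqrt_le_sqrt (hanti k hk))
          (Real.sqrt_nonneg K)
      have hCb : Real.sqrt (2 / ρ) * σ k * L
          ≤ Real.sqrt (2 / ρ) * (c * (η k) ^ ((3 : ℝ) / 2)) * L :=
        mul_le_mul_of_nonneg_right
          (mul_le_mul_of_nonneg_left hσb (Real.sqrt_nonneg _)) hL.le
      have hprod : (η k) ^ ((3 : ℝ) / 2) * Real.sqrt (η k) = (η k) ^ 2 := by
        rw [Real.sqrt_eq_rpow, ← Real.rpow_add hηk]
        norm_num
      have hrpow_nonneg : 0 ≤ (η k) ^ ((3 : ℝ) / 2) := Real.rpow_nonneg hηk.le _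
      have h1 : Real.sqrt (2 / ρ) * σ k * L * Real.sqrt (K * η (k + 1))
          ≤ (Real.sqrt (2 / ρ) * c * L * Real.sqrt K) * (η k) ^ 2 := by
        calc Real.sqrt (2 / ρ) * σ k * L * Real.sqrt (K * η (k + 1))
            ≤ (Real.sqrt (2 / ρ) * (c * (η k) ^ ((3 : ℝ) / 2)) * L)
              * (Real.sqrt K * Real.sqrt (η k)) := by
              apply mul_le_mul hCb hsqG (Real.sqrt_nonneg _)
              exact mul_nonneg (mul_nonneg (Real.sqrt_nonneg _)
                (mul_nonneg hc.le hrpow_nonneg)) hL.le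
          _ = (Real.sqrt (2 / ρ) * c * L * Real.sqrt K)
              * ((η k) ^ ((3 : ℝ) / 2) * Real.sqrt (η k)) := by ring
          _ = (Real.sqrt (2 / ρ) * c * L * Real.sqrt K) * (η k) ^ 2 := by rw [hprod]
      have h2 : (1 - η k) * e k ≤ (1 - η k) * (K * η k) :=
        mul_le_mul_of_nonneg_left IH (by linarith)
      have h3 := mul_le_mul_of_nonneg_right hmain (sq_nonneg (η k))
      have h4 := mul_le_mul_of_nonneg_left (hkey k hk) hKpos.le
      linarith [h1, h2, h3, h4]
    exact quad_aux (e (k + 1))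
      ((1 - η k) * e k + (lam * R ^ 2 / ρ) * (η k) ^ 2)
      (Real.sqrt (2 / ρ) * σ k * L) (K * η (k + 1))
      hD0 hC0 hGpos (he _) hrk hbound
end

section
/- Let X_0, X_1, …, X_k be independent random variables taking values in [a, b] each with mean μ, and define Y_{k} = Σ_{i=0}^{k} w_i X_i where w_i = (2/(i+2))·∏_{j=i+1}^{k} (j/(j+2)). Then each w_i ≤ 2/(k+2), Σ_{i=0}^k w_i = 1 (up to the initial-term weighting), and P(|Y_k - μ| ≥ ε) ≤ 2 exp(-(k+2)ε²/(2(b-a)²)). -/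
/-!
Unrolled, `Y_k - μ = ∑ w_i (X_i - μ)` with `w_i = 2(i+1)/((k+1)(k+2))`, so `∑ w_i = 1` and
`∑ w_i² ≤ max_i w_i ≤ 2/(k+2)`. By Hoeffding's lemma each `w_i (X_i - μ)` is sub-Gaussian with
variance proxy `w_i² (b-a)²/4`; by independence these proxies add up, and the sub-Gaussian
Chernoff bound applied to `±(Y_k - μ)` gives the two-sided tail estimate.
-/

open MeasureTheory ProbabilityTheory Finset

open scoped NNReal

-- The weight of `X_i` in `Y_k` after unrolling `Y_{k+1} = (1 - γ_k) Y_k + γ_k X_k`,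
-- `γ_k = 2 / (k + 2)`.
noncomputable def averagingWeight (k i : ℕ) : ℝ :=
  2 / (i + 2) * ∏ j ∈ Icc (i + 1) k, (j : ℝ) / (j + 2)

lemma prod_Icc_div_add_two {i k : ℕ} (hik : i ≤ k) :
    ∏ j ∈ Icc (i + 1) k, (j : ℝ) / (j + 2) = (i + 1) * (i + 2) / ((k + 1) * (k + 2)) := by
  induction k, hik using Nat.le_induction with
  | base => simp [field]
  | succ n hin ih =>
    rw [prod_Icc_succ_top (by omega), ih]
    push_cast
    field_simp
    ring

lemma averagingWeight_eq {i k : ℕ} (hik : i ≤ k) :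
    averagingWeight k i = 2 * (i + 1) / ((k + 1) * (k + 2)) := by
  rw [averagingWeight, prod_Icc_div_add_two hik]
  field_simp

lemma averagingWeight_nonneg {i k : ℕ} (hik : i ≤ k) : 0 ≤ averagingWeight k i := by
  rw [averagingWeight_eq hik]
  positivity

lemma averagingWeight_le {i k : ℕ} (hik : i ≤ k) : averagingWeight k i ≤ 2 / (k + 2) := by
  rw [averagingWeight_eq hik, div_le_div_iff₀ (by positivity) (by positivity)]
  have : (i : ℝ) ≤ k := by exact_mod_cast hik
  nlinarith

lemma sum_range_cast_add_one (n : ℕ) : ∑ i ∈ range n, ((i : ℝ) + 1) = n * (n + 1) / 2 := by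
  induction n with
  | zero => simp
  | succ n ih => rw [sum_range_succ, ih]; push_cast; ring

lemma sum_averagingWeight (k : ℕ) : ∑ i ∈ range (k + 1), averagingWeight k i = 1 := by
  rw [sum_congr rfl fun i hi => averagingWeight_eq (Nat.le_of_lt_succ (mem_range.1 hi)),
    ← sum_div, ← mul_sum, sum_range_cast_add_one]
  push_cast
  field_simp
  ring

lemma sum_sq_le_of_le_of_sum_eq_one {ι : Type*} {s : Finset ι} {w : ι → ℝ} {C : ℝ}
    (h0 : ∀ i ∈ s, 0 ≤ w i) (hC : ∀ i ∈ s, w i ≤ C) (h1 : ∑ i ∈ s, w i = 1) :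
    ∑ i ∈ s, w i ^ 2 ≤ C :=
  calc ∑ i ∈ s, w i ^ 2 ≤ ∑ i ∈ s, C * w i :=
        sum_le_sum fun i hi => by rw [sq]; exact mul_le_mul_of_nonneg_right (hC i hi) (h0 i hi)
    _ = C := by rw [← mul_sum, h1, mul_one]

namespace ProbabilityTheory.HasSubgaussianMGF

variable {Ω : Type*} [MeasurableSpace Ω] {P : Measure Ω} {X : Ω → ℝ} {c : ℝ≥0}

lemma mono (h : HasSubgaussianMGF X c P) {c' : ℝ≥0} (hc : c ≤ c') :
    HasSubgaussianMGF X c' P where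
  integrable_exp_mul := h.integrable_exp_mul
  mgf_le t := (h.mgf_le t).trans (Real.exp_le_exp.2 (by gcongr))

lemma const_mul_nnnorm (h : HasSubgaussianMGF X c P) (r : ℝ) :
    HasSubgaussianMGF (fun ω => r * X ω) (‖r‖₊ ^ 2 * c) P := by
  convert h.const_mul r using 2
  exact NNReal.eq (by simp; rfl)

lemma measure_abs_ge_le [IsFiniteMeasure P] (h : HasSubgaussianMGF X c P) {ε : ℝ}
    (hε : 0 ≤ ε) :
    P {ω | ε ≤ |X ω|} ≤ 2 * ENNReal.ofReal (Real.exp (-ε ^ 2 / (2 * c))) := by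
  have hsplit : {ω | ε ≤ |X ω|} = {ω | ε ≤ X ω} ∪ {ω | ε ≤ (-X) ω} := by
    ext ω
    simp only [Set.mem_ofPred_eq, Set.mem_union, Pi.neg_apply, le_abs]
  calc P {ω | ε ≤ |X ω|} ≤ P {ω | ε ≤ X ω} + P {ω | ε ≤ (-X) ω} :=
        hsplit ▸ measure_union_le _ _
    _ ≤ ENNReal.ofReal (Real.exp (-ε ^ 2 / (2 * c)))
          + ENNReal.ofReal (Real.exp (-ε ^ 2 / (2 * c))) := by
        rw [← ofReal_measureReal, ← ofReal_measureReal]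
        gcongr
        exacts [h.measure_ge_le hε, h.neg.measure_ge_le hε]
    _ = _ := (two_mul _).symm

end ProbabilityTheory.HasSubgaussianMGF

lemma hasSubgaussianMGF_weightedSum_sub {Ω ι : Type*} [MeasurableSpace Ω] {P : Measure Ω}
    [IsProbabilityMeasure P] {X : ι → Ω → ℝ} {a b μ : ℝ} (hindep : iIndepFun X P)
    (hmeas : ∀ i, AEMeasurable (X i) P) (hbdd : ∀ i, ∀ᵐ ω ∂P, X i ω ∈ Set.Icc a b)
    (hmean : ∀ i, P[X i] = μ) {s : Finset ι} {w : ι → ℝ} (hw : ∑ i ∈ s, w i = 1) :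
    HasSubgaussianMGF (fun ω => ∑ i ∈ s, w i * X i ω - μ)
      ((‖b - a‖₊ / 2) ^ 2 * ∑ i ∈ s, ‖w i‖₊ ^ 2) P := by
  have hcentered :
      (fun ω => ∑ i ∈ s, w i * X i ω - μ) = fun ω => ∑ i ∈ s, w i * (X i ω - μ) := by
    ext ω
    simp_rw [mul_sub, sum_sub_distrib, ← sum_mul, hw, one_mul]
  have hterm : ∀ i ∈ s, HasSubgaussianMGF (fun ω => w i * (X i ω - μ))
      (‖w i‖₊ ^ 2 * (‖b - a‖₊ / 2) ^ 2) P := by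
    intro i _
    simpa only [hmean i] using
      (hasSubgaussianMGF_of_mem_Icc (hmeas i) (hbdd i)).const_mul_nnnorm (w i)
  have hindep' : iIndepFun (fun i ω => w i * (X i ω - μ)) P :=
    hindep.comp (fun i x => w i * (x - μ)) fun i => by fun_prop
  rw [hcentered, mul_sum]
  simp_rw [mul_comm ((‖b - a‖₊ / 2) ^ 2)]
  exact HasSubgaussianMGF.sum_of_iIndepFun hindep' hterm

theorem stmt_15_general {Ω : Type*} [MeasurableSpace Ω] (P : Measure Ω) [IsProbabilityMeasure P]
    (k : ℕ) (a b μ ε : ℝ) (hε : 0 < ε)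
    (X : ℕ → Ω → ℝ)
    (hmeas : ∀ i, Measurable (X i))
    (hindep : iIndepFun X P)
    (hbdd : ∀ i, ∀ ω, X i ω ∈ Set.Icc a b)
    (hmean : ∀ i, ∫ ω, X i ω ∂P = μ)
    (w : ℕ → ℝ)
    (hw : ∀ i, w i = (2 / (i + 2)) * ∏ j ∈ Finset.Icc (i + 1) k, (j : ℝ) / (j + 2))
    (Y : Ω → ℝ)
    (hY : ∀ ω, Y ω = ∑ i ∈ Finset.range (k + 1), w i * X i ω) :
    (∀ i ≤ k, w i ≤ 2 / (k + 2))
    ∧ (∑ i ∈ Finset.range (k + 1), w i = 1)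
    ∧ P {ω | ε ≤ |Y ω - μ|}
        ≤ 2 * ENNReal.ofReal (Real.exp (-(k + 2) * ε ^ 2 / (2 * (b - a) ^ 2))) := by
  obtain rfl : w = averagingWeight k := funext hw
  obtain rfl : Y = fun ω => ∑ i ∈ range (k + 1), averagingWeight k i * X i ω := funext hY
  refine ⟨fun i => averagingWeight_le, sum_averagingWeight k, ?_⟩
  have hsq : ∑ i ∈ range (k + 1), averagingWeight k i ^ 2 ≤ 2 / (k + 2) :=
    sum_sq_le_of_le_of_sum_eq_one
      (fun i hi => averagingWeight_nonneg (Nat.le_of_lt_succ (mem_range.1 hi)))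
      (fun i hi => averagingWeight_le (Nat.le_of_lt_succ (mem_range.1 hi)))
      (sum_averagingWeight k)
  -- Hoeffding gives the proxy `(b - a)² / (2 (k + 2))`; the stated exponent only needs twice that.
  have hproxy : (‖b - a‖₊ / 2) ^ 2 * ∑ i ∈ range (k + 1), ‖averagingWeight k i‖₊ ^ 2
      ≤ ‖b - a‖₊ ^ 2 / (k + 2) := by
    rw [← NNReal.coe_le_coe]
    push_cast
    simp only [Real.norm_eq_abs, sq_abs]
    calc (|b - a| / 2) ^ 2 * ∑ i ∈ range (k + 1), averagingWeight k i ^ 2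
        ≤ (|b - a| / 2) ^ 2 * (2 / (k + 2)) := by gcongr
      _ ≤ (b - a) ^ 2 / (k + 2) := by
        rw [div_pow, sq_abs]
        field_simp
        nlinarith [sq_nonneg (b - a)]
  have hsub := (hasSubgaussianMGF_weightedSum_sub hindep (fun i => (hmeas i).aemeasurable)
    (fun i => ae_of_all _ (hbdd i)) hmean (sum_averagingWeight k)).mono hproxy
  convert hsub.measure_abs_ge_le hε.le using 4
  push_cast
  rw [Real.norm_eq_abs, sq_abs]
  field_simp

theorem stmt_15 {Ω : Type*} [MeasurableSpace Ω] (P : Measure Ω) [IsProbabilityMeasure P]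
    (k : ℕ) (a b μ ε : ℝ) (hab : a < b) (hε : 0 < ε)
    (X : ℕ → Ω → ℝ)
    (hmeas : ∀ i, Measurable (X i))
    (hindep : iIndepFun X P)
    (hbdd : ∀ i, ∀ ω, X i ω ∈ Set.Icc a b)
    (hmean : ∀ i, ∫ ω, X i ω ∂P = μ)
    (w : ℕ → ℝ)
    (hw : ∀ i, w i = (2 / (i + 2)) * ∏ j ∈ Finset.Icc (i + 1) k, (j : ℝ) / (j + 2))
    (Y : Ω → ℝ)
    (hY : ∀ ω, Y ω = ∑ i ∈ Finset.range (k + 1), w i * X i ω) :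
    (∀ i ≤ k, w i ≤ 2 / (k + 2))
    ∧ (∑ i ∈ Finset.range (k + 1), w i = 1)
    ∧ P {ω | ε ≤ |Y ω - μ|}
        ≤ 2 * ENNReal.ofReal (Real.exp (-(k + 2) * ε ^ 2 / (2 * (b - a) ^ 2))) :=
  stmt_15_general P k a b μ ε hε X hmeas hindep hbdd hmean w hw Y hY
end
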